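/- The only 2-polytopes containing a special 1-simplex are convex quadrilaterals: a polygon P ⊂ ℝ² has two vertices v₀, v₁ such that every edge of P contains exactly one of them if and only if P has exactly 4 vertices. -/

import Mathlib

/-!
The vertices and edges of a polygon form a 2-regular graph. In a `d`-regular graph, two distinct
vertices meet every edge exactly once iff they are not adjacent and there are exactly `2 d` edges:
the `d + d` edges at the two vertices are then disjoint and exhaust all edges. A 2-regular graph
has as many edges as vertices, so such a pair exists iff there are 4 vertices.

To see that each vertex `v` of a polygon lies on exactly two edges, separate `v` from the other
vertices by a functional `c` and sort the other vertices `u` by the slope of the ray from `v`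
through `u`: the edges at `v` lead to the vertices of maximal and of minimal slope.
-/

open Set Module

/-- A (possibly empty or improper) face of `P`: the set of maximizers of a linear
functional over `P` (at level `α`, an upper bound of the functional on `P`). -/
def IsFace {E : Type*} [AddCommGroup E] [Module ℝ E] (P F : Set E) : Prop :=
  ∃ (c : E →ₗ[ℝ] ℝ) (α : ℝ), (∀ x ∈ P, c x ≤ α) ∧ F = {x ∈ P | c x = α}

/-- A facet of the polytope `P`: a nonempty proper face of dimension `dim P - 1`. -/
def IsFacet {E : Type*} [AddCommGroup E] [Module ℝ E] (P F : Set E) : Prop :=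
  IsFace P F ∧ F ≠ P ∧ F.Nonempty ∧
    Module.finrank ℝ (vectorSpan ℝ F) + 1 = Module.finrank ℝ (vectorSpan ℝ P)

/-- The number of nonempty proper faces of `P` of dimension `i`. -/
noncomputable def nF {E : Type*} [AddCommGroup E] [Module ℝ E] (P : Set E) (i : ℕ) : ℕ :=
  Set.ncard {F : Set E | IsFace P F ∧ F ≠ P ∧ F.Nonempty ∧
    Module.finrank ℝ (vectorSpan ℝ F) = i}

namespace SimpleGraph

variable {α : Type*} [Fintype α] [DecidableEq α] {G : SimpleGraph α} [DecidableRel G.Adj]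

theorem forall_xor_mem_edge_iff {d : ℕ} (hG : G.IsRegularOfDegree d) {v₀ v₁ : α}
    (hne : v₀ ≠ v₁) :
    (∀ e ∈ G.edgeSet, Xor (v₀ ∈ e) (v₁ ∈ e)) ↔
      ¬G.Adj v₀ v₁ ∧ G.edgeFinset.card = 2 * d := by
  set I := G.incidenceFinset v₀ ∪ G.incidenceFinset v₁
  have hsub : I ⊆ G.edgeFinset :=
    Finset.union_subset (G.incidenceFinset_subset v₀) (G.incidenceFinset_subset v₁)
  have hcard (h : ¬G.Adj v₀ v₁) : I.card = 2 * d := by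
    rw [Finset.card_union_of_disjoint, card_incidenceFinset_eq_degree,
      card_incidenceFinset_eq_degree, hG.degree_eq, hG.degree_eq, two_mul]
    rw [← Finset.disjoint_coe, coe_incidenceFinset, coe_incidenceFinset,
      Set.disjoint_iff_inter_eq_empty]
    exact G.incidenceSet_inter_incidenceSet_of_not_adj h hne
  have hmem {e} (he : e ∈ G.edgeSet) : e ∈ I ↔ v₀ ∈ e ∨ v₁ ∈ e := by
    simp [I, incidenceSet, he]
  constructor
  · intro h
    have hnadj : ¬G.Adj v₀ v₁ := fun hadj ↦
      (xor_iff_or_and_not_and _ _).1 (h _ hadj) |>.2 ⟨Sym2.mem_mk_left _ _, Sym2.mem_mk_right _ _⟩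
    refine ⟨hnadj, ?_⟩
    rw [← hcard hnadj, Finset.Subset.antisymm_iff.2 ⟨hsub, fun e he ↦ ?_⟩]
    rw [mem_edgeFinset] at he
    exact (hmem he).2 ((xor_iff_or_and_not_and _ _).1 (h e he)).1
  · rintro ⟨hnadj, hE⟩ e he
    have hI : I = G.edgeFinset := Finset.eq_of_subset_of_card_le hsub (by rw [hE, hcard hnadj])
    refine (xor_iff_or_and_not_and _ _).2 ⟨(hmem he).1 ?_, fun h ↦ ?_⟩
    · rwa [hI, mem_edgeFinset]
    · exact hnadj (G.adj_of_mem_incidenceSet hne ⟨he, h.1⟩ ⟨he, h.2⟩)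

theorem IsRegularOfDegree.exists_xor_mem_edge_iff_card_eq_four (hG : G.IsRegularOfDegree 2) :
    (∃ v₀ v₁, v₀ ≠ v₁ ∧ ∀ e ∈ G.edgeSet, Xor (v₀ ∈ e) (v₁ ∈ e)) ↔ Fintype.card α = 4 := by
  have hE : G.edgeFinset.card = Fintype.card α := by
    have := G.sum_degrees_eq_twice_card_edges
    simp only [hG.degree_eq, Finset.sum_const, Finset.card_univ, smul_eq_mul] at this
    omega
  constructor
  · rintro ⟨v₀, v₁, hne, h⟩
    rw [← hE, ((forall_xor_mem_edge_iff hG hne).1 h).2]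
  · intro h4
    obtain ⟨v₀⟩ : Nonempty α := Fintype.card_pos_iff.1 (by omega)
    have : (insert v₀ (G.neighborFinset v₀)).card < Fintype.card α := by
      grw [Finset.card_insert_le, card_neighborFinset_eq_degree, hG.degree_eq, h4]
      norm_num
    obtain ⟨v₁, -, hv₁⟩ := Finset.exists_mem_notMem_of_card_lt_card
      (this.trans_eq Finset.card_univ.symm)
    rw [Finset.mem_insert, mem_neighborFinset, not_or] at hv₁
    exact ⟨v₀, v₁, Ne.symm hv₁.1, (forall_xor_mem_edge_iff hG (Ne.symm hv₁.1)).2 ⟨hv₁.2, by omega⟩⟩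

end SimpleGraph

section Faces

variable {E : Type*} [AddCommGroup E] [Module ℝ E] {V : Finset E}

theorem vectorSpan_convexHull (s : Set E) : vectorSpan ℝ (convexHull ℝ s) = vectorSpan ℝ s := by
  rw [← direction_affineSpan, affineSpan_convexHull, direction_affineSpan]

theorem convexHull_sep_eq_convexHull_filter {φ : E →ₗ[ℝ] ℝ} {α : ℝ}
    (hle : ∀ u ∈ V, φ u ≤ α) :
    {x ∈ convexHull ℝ (V : Set E) | φ x = α} = convexHull ℝ ↑(V.filter (φ · = α)) := by
  classical
  refine Set.Subset.antisymm ?_ fun x hx ↦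
    ⟨convexHull_mono (Finset.coe_subset.2 (Finset.filter_subset _ V)) hx, ?_⟩
  · rintro x ⟨hx, rfl⟩
    obtain ⟨w, hw₀, hw₁, rfl⟩ := Finset.mem_convexHull'.1 hx
    have hzero : ∀ u ∈ V, w u ≠ 0 → φ u = φ (∑ y ∈ V, w y • y) := by
      have hsum : ∑ u ∈ V, w u * (φ (∑ y ∈ V, w y • y) - φ u) = 0 := by
        simp only [mul_sub, Finset.sum_sub_distrib, ← Finset.sum_mul, hw₁, map_sum, map_smul,
          smul_eq_mul, one_mul, sub_self]
      intro u hu hwu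
      have := (Finset.sum_eq_zero_iff_of_nonneg fun y hy ↦
        mul_nonneg (hw₀ y hy) (sub_nonneg.2 (hle y hy))).1 hsum u hu
      linarith [(mul_eq_zero.1 this).resolve_left hwu]
    refine Finset.mem_convexHull'.2 ⟨w, fun y hy ↦ hw₀ y (Finset.mem_filter.1 hy).1, ?_, ?_⟩
    · rwa [Finset.sum_filter_of_ne fun u hu hwu ↦ hzero u hu hwu]
    · rw [Finset.sum_filter_of_ne fun u hu hwu ↦ hzero u hu (left_ne_zero_of_smul hwu)]
  · exact convexHull_min (fun u hu ↦ (Finset.mem_filter.1 hu).2)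
      (convex_hyperplane φ.isLinear α) hx

theorem not_collinear_of_mem_extremePoints {A : Set E} {x y z : E} (hx : x ∈ A.extremePoints ℝ)
    (hy : y ∈ A.extremePoints ℝ) (hz : z ∈ A.extremePoints ℝ) (hxy : x ≠ y) (hxz : x ≠ z)
    (hyz : y ≠ z) : ¬Collinear ℝ {x, y, z} := by
  intro hcol
  have between {a b c : E} (hb : b ∈ A.extremePoints ℝ) (ha : a ∈ A) (hc : c ∈ A)
      (h : Wbtw ℝ a b c) : b = a ∨ b = c :=
    (mem_extremePoints_iff_forall_segment.1 hb).2 a ha c hc h.mem_segment |>.imp Eq.symm Eq.symm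
  have hx' := extremePoints_subset hx
  have hy' := extremePoints_subset hy
  have hz' := extremePoints_subset hz
  rcases hcol.wbtw_or_wbtw_or_wbtw with h | h | h
  · rcases between hy hx' hz' h with h | h <;> simp_all
  · rcases between hz hy' hx' h with h | h <;> simp_all
  · rcases between hx hz' hy' h with h | h <;> simp_all

def IsEdge (V : Finset E) (x y : E) : Prop :=
  ∃ F, IsFacet (convexHull ℝ (V : Set E)) F ∧ ∀ u ∈ V, u ∈ F ↔ u = x ∨ u = y

theorem isEdge_of_forall_le (hV : finrank ℝ (vectorSpan ℝ (V : Set E)) = 2) {φ : E →ₗ[ℝ] ℝ}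
    {x y : E} (hx : x ∈ V) (hy : y ∈ V) (hxy : x ≠ y) (hle : ∀ u ∈ V, φ u ≤ φ x)
    (heq : ∀ u ∈ V, φ u = φ x ↔ u = x ∨ u = y) : IsEdge V x y := by
  classical
  have hfilter : V.filter (φ · = φ x) = {x, y} := by
    ext u
    simp only [Finset.mem_filter, Finset.mem_insert, Finset.mem_singleton]
    exact ⟨fun h ↦ (heq u h.1).1 h.2, fun h ↦ ⟨by rcases h with rfl | rfl <;> assumption,
      (heq u (by rcases h with rfl | rfl <;> assumption)).2 h⟩⟩
  have hF := convexHull_sep_eq_convexHull_filter hle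
  rw [hfilter, Finset.coe_pair] at hF
  have hdim : finrank ℝ (vectorSpan ℝ {z ∈ convexHull ℝ (V : Set E) | φ z = φ x}) = 1 := by
    rw [hF, vectorSpan_convexHull, vectorSpan_pair, finrank_span_singleton (vsub_ne_zero.2 hxy)]
  have hxP : x ∈ convexHull ℝ (V : Set E) := subset_convexHull ℝ _ hx
  refine ⟨_, ⟨⟨φ, φ x, fun z hz ↦ ?_, rfl⟩, fun h ↦ ?_, ⟨x, hxP, rfl⟩, ?_⟩, fun u hu ↦ ?_⟩
  · exact convexHull_min hle (convex_halfSpace_le φ.isLinear _) hz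
  · rw [h, vectorSpan_convexHull, hV] at hdim
    exact absurd hdim (by norm_num)
  · rw [hdim, vectorSpan_convexHull, hV]
  · exact ⟨fun h ↦ (heq u hu).1 h.2, fun h ↦ ⟨subset_convexHull ℝ _ hu, (heq u hu).2 h⟩⟩

theorem IsFacet.exists_vertices_eq_pair (hV : finrank ℝ (vectorSpan ℝ (V : Set E)) = 2)
    (hvert : ∀ u ∈ V, u ∈ (convexHull ℝ (V : Set E)).extremePoints ℝ) {F : Set E}
    (hF : IsFacet (convexHull ℝ (V : Set E)) F) :
    ∃ x ∈ V, ∃ y ∈ V, x ≠ y ∧ ∀ u ∈ V, u ∈ F ↔ u = x ∨ u = y := by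
  obtain ⟨⟨φ, α, hle, rfl⟩, -, -, hdim⟩ := hF
  rw [convexHull_sep_eq_convexHull_filter fun u hu ↦ hle u (subset_convexHull ℝ _ hu),
    vectorSpan_convexHull, vectorSpan_convexHull, hV] at hdim
  set W := V.filter (φ · = α)
  have hW : finrank ℝ (vectorSpan ℝ (W : Set E)) = 1 := by omega
  have := finiteDimensional_vectorSpan_of_finite ℝ W.finite_toSet
  have hcol : Collinear ℝ (W : Set E) := collinear_iff_finrank_le_one.2 hW.le
  obtain ⟨x, hx, y, hy, hxy⟩ : (W : Set E).Nontrivial := by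
    rw [← Set.not_subsingleton_iff, ← vectorSpan_eq_bot_iff_subsingleton (k := ℝ)]
    intro h
    rw [h, finrank_bot] at hW
    exact zero_ne_one hW
  have hWV : W ⊆ V := Finset.filter_subset _ V
  refine ⟨x, hWV hx, y, hWV hy, hxy, fun u hu ↦ ?_⟩
  have hmemW : u ∈ {z ∈ convexHull ℝ (V : Set E) | φ z = α} ↔ u ∈ W := by
    simp [W, hu, subset_convexHull ℝ (V : Set E) hu]
  rw [hmemW]
  refine ⟨fun huW ↦ ?_, by rintro (rfl | rfl) <;> assumption⟩
  by_contra! h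
  refine not_collinear_of_mem_extremePoints (hvert x (hWV hx)) (hvert y (hWV hy)) (hvert u hu)
    hxy (Ne.symm h.1) (Ne.symm h.2) (hcol.subset ?_)
  simp [Set.insert_subset_iff, hx, hy, huW]

def facetGraph (V : Finset E) : SimpleGraph V where
  Adj x y := x ≠ y ∧ IsEdge V x y
  symm := ⟨fun _ _ ⟨hne, F, hF, hmem⟩ ↦ ⟨hne.symm, F, hF, fun u hu ↦ (hmem u hu).trans or_comm⟩⟩
  loopless := ⟨fun _ h ↦ h.1 rfl⟩

@[simp]
theorem facetGraph_adj {x y : V} :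
    (facetGraph V).Adj x y ↔ x ≠ y ∧ IsEdge V x y :=
  Iff.rfl

theorem forall_xor_mem_isFacet_iff (hV : finrank ℝ (vectorSpan ℝ (V : Set E)) = 2)
    (hvert : ∀ u ∈ V, u ∈ (convexHull ℝ (V : Set E)).extremePoints ℝ) {v₀ v₁ : V} :
    (∀ F, IsFacet (convexHull ℝ (V : Set E)) F → Xor (↑v₀ ∈ F) (↑v₁ ∈ F)) ↔
      ∀ e ∈ (facetGraph V).edgeSet, Xor (v₀ ∈ e) (v₁ ∈ e) := by
  constructor
  · intro h e he
    induction e using Sym2.ind with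
    | h x y =>
      obtain ⟨-, F, hF, hmem⟩ := he
      simpa only [Sym2.mem_iff, Subtype.ext_iff, ← hmem _ v₀.2, ← hmem _ v₁.2] using h F hF
  · intro h F hF
    obtain ⟨x, hx, y, hy, hxy, hmem⟩ := hF.exists_vertices_eq_pair hV hvert
    have := h s(⟨x, hx⟩, ⟨y, hy⟩) ⟨Subtype.coe_ne_coe.1 hxy, F, hF, hmem⟩
    simpa only [Sym2.mem_iff, Subtype.ext_iff, ← hmem _ v₀.2, ← hmem _ v₁.2] using this

end Faces

section RaySlope

variable {E : Type*} [AddCommGroup E] [Module ℝ E] {v : E} {c g : E →ₗ[ℝ] ℝ}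

noncomputable def raySlope (c g : E →ₗ[ℝ] ℝ) (v u : E) : ℝ := g (u - v) / c (u - v)

theorem raySlope_mul {u : E} (h : c (u - v) ≠ 0) : raySlope c g v u * c (u - v) = g (u - v) :=
  div_mul_cancel₀ _ h

theorem raySlope_neg (u : E) : raySlope c (-g) v u = -raySlope c g v u := by
  simp only [raySlope, LinearMap.neg_apply, neg_div]

theorem exists_pos_smul_add_pos_smul_of_raySlope_lt (hcg : ∀ x, c x = 0 → g x = 0 → x = 0)
    {a b w : E} (ha : c (a - v) < 0) (hb : c (b - v) < 0) (hw : c (w - v) < 0)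
    (hbw : raySlope c g v b < raySlope c g v w) (hwa : raySlope c g v w < raySlope c g v a) :
    ∃ s₁ s₂ : ℝ, 0 < s₁ ∧ 0 < s₂ ∧ w - v = s₁ • (b - v) + s₂ • (a - v) := by
  set ta := raySlope c g v a
  set tb := raySlope c g v b
  set tw := raySlope c g v w
  have hca := ha.ne
  have hcb := hb.ne
  have htab : ta - tb ≠ 0 := by linarith
  -- the solution of the linear system obtained by applying `c` and `g`
  refine ⟨c (w - v) * (ta - tw) / (c (b - v) * (ta - tb)),
    c (w - v) * (tw - tb) / (c (a - v) * (ta - tb)),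
    div_pos_of_neg_of_neg (mul_neg_of_neg_of_pos hw (by linarith))
      (mul_neg_of_neg_of_pos hb (by linarith)),
    div_pos_of_neg_of_neg (mul_neg_of_neg_of_pos hw (by linarith))
      (mul_neg_of_neg_of_pos ha (by linarith)), sub_eq_zero.1 (hcg _ ?_ ?_)⟩ <;>
    rw [map_sub, map_add, map_smul, map_smul, smul_eq_mul, smul_eq_mul]
  · field_simp
    ring
  · rw [← raySlope_mul (g := g) hw.ne, ← raySlope_mul (g := g) hb.ne,
      ← raySlope_mul (g := g) ha.ne]
    field_simp
    ring

variable [DecidableEq E] {V : Finset E}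

theorem raySlope_injOn (hvert : ∀ u ∈ V, u ∈ (convexHull ℝ (V : Set E)).extremePoints ℝ)
    (hv : v ∈ V) (hc : ∀ u ∈ V.erase v, c (u - v) < 0)
    (hcg : ∀ x, c x = 0 → g x = 0 → x = 0) : Set.InjOn (raySlope c g v) (V.erase v : Set E) := by
  intro u hu u' hu' hslope
  have hcu := (hc u hu).ne
  have hcu' := (hc u' hu').ne
  set s := c (u - v) / c (u' - v)
  have hray : u = AffineMap.lineMap v u' s := by
    rw [AffineMap.lineMap_apply, vsub_eq_sub, vadd_eq_add, ← sub_eq_iff_eq_add]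
    refine sub_eq_zero.1 (hcg _ ?_ ?_)
    · rw [map_sub, map_smul, smul_eq_mul, div_mul_cancel₀ _ hcu', sub_self]
    · rw [map_sub, map_smul, smul_eq_mul, ← raySlope_mul hcu, ← raySlope_mul hcu', hslope,
        mul_left_comm, div_mul_cancel₀ _ hcu', sub_self]
  by_contra hne
  have hcol : Collinear ℝ {u, v, u'} :=
    collinear_insert_of_mem_affineSpan_pair (hray ▸ AffineMap.lineMap_mem_affineSpan_pair _ _ _)
  exact not_collinear_of_mem_extremePoints (hvert u (Finset.mem_of_mem_erase hu)) (hvert v hv)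
    (hvert u' (Finset.mem_of_mem_erase hu')) (Finset.ne_of_mem_erase hu) hne
    (Finset.ne_of_mem_erase hu').symm hcol

theorem isEdge_of_forall_raySlope_le (hV : finrank ℝ (vectorSpan ℝ (V : Set E)) = 2)
    (hvert : ∀ u ∈ V, u ∈ (convexHull ℝ (V : Set E)).extremePoints ℝ) (hv : v ∈ V)
    (hc : ∀ u ∈ V.erase v, c (u - v) < 0) (hcg : ∀ x, c x = 0 → g x = 0 → x = 0) {a : E}
    (ha : a ∈ V.erase v) (hmax : ∀ u ∈ V.erase v, raySlope c g v u ≤ raySlope c g v a) :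
    IsEdge V v a := by
  set φ := raySlope c g v a • c - g
  have hφ : ∀ u ∈ V.erase v, φ u - φ v = (raySlope c g v a - raySlope c g v u) * c (u - v) := by
    intro u hu
    rw [← map_sub, sub_mul, raySlope_mul (hc u hu).ne]
    simp [φ]
  refine isEdge_of_forall_le (φ := φ) hV hv (Finset.mem_of_mem_erase ha)
    (Finset.ne_of_mem_erase ha).symm (fun u hu ↦ ?_) (fun u hu ↦ ?_)
  · rcases eq_or_ne u v with rfl | huv
    · rfl
    have hu' := Finset.mem_erase.2 ⟨huv, hu⟩
    nlinarith [hφ u hu', hc u hu', hmax u hu']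
  · rcases eq_or_ne u v with rfl | huv
    · simp
    have hu' := Finset.mem_erase.2 ⟨huv, hu⟩
    rw [← sub_eq_zero, hφ u hu', mul_eq_zero, or_iff_left (hc u hu').ne, sub_eq_zero, eq_comm,
      (raySlope_injOn hvert hv hc hcg).eq_iff (Finset.mem_coe.2 hu') (Finset.mem_coe.2 ha)]
    simp [huv]

theorem eq_or_eq_of_isEdge (hvert : ∀ u ∈ V, u ∈ (convexHull ℝ (V : Set E)).extremePoints ℝ)
    (hv : v ∈ V) (hc : ∀ u ∈ V.erase v, c (u - v) < 0) (hcg : ∀ x, c x = 0 → g x = 0 → x = 0)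
    {a b w : E} (ha : a ∈ V.erase v) (hb : b ∈ V.erase v) (hw : w ∈ V.erase v)
    (hmax : ∀ u ∈ V.erase v, raySlope c g v u ≤ raySlope c g v a)
    (hmin : ∀ u ∈ V.erase v, raySlope c g v b ≤ raySlope c g v u) (hedge : IsEdge V v w) :
    w = a ∨ w = b := by
  by_contra! h
  have hinj := raySlope_injOn hvert hv hc hcg
  obtain ⟨s₁, s₂, hs₁, hs₂, hdecomp⟩ := exists_pos_smul_add_pos_smul_of_raySlope_lt hcg
    (hc a ha) (hc b hb) (hc w hw)
    ((hmin w hw).lt_of_ne fun h' ↦ h.2 (hinj hw hb h'.symm))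
    ((hmax w hw).lt_of_ne fun h' ↦ h.1 (hinj hw ha h'))
  -- a functional maximal at `v` and `w` is then also maximal at `b`
  obtain ⟨F, ⟨⟨ψ, β, hle, rfl⟩, -⟩, hF⟩ := hedge
  have hbV := Finset.mem_of_mem_erase hb
  have hψv : ψ v = β := ((hF v hv).2 (Or.inl rfl)).2
  have hψw : ψ w = β := ((hF w (Finset.mem_of_mem_erase hw)).2 (Or.inr rfl)).2
  have hψa := hle a (subset_convexHull ℝ _ (Finset.mem_of_mem_erase ha))
  have hψb := hle b (subset_convexHull ℝ _ hbV)
  have hψ := congrArg ψ hdecomp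
  simp only [map_sub, map_add, map_smul, smul_eq_mul, hψv, hψw] at hψ
  have hψb' : ψ b = β := le_antisymm hψb (by nlinarith)
  rcases (hF b hbV).1 ⟨subset_convexHull ℝ _ hbV, hψb'⟩ with h' | h'
  · exact Finset.ne_of_mem_erase hb h'
  · exact h.2 h'.symm

end RaySlope

theorem exists_linearMap_lt_of_mem_extremePoints {E : Type*} [NormedAddCommGroup E]
    [NormedSpace ℝ E] [DecidableEq E] {V : Finset E} {v : E}
    (hv : v ∈ (convexHull ℝ (V : Set E)).extremePoints ℝ) :
    ∃ c : E →ₗ[ℝ] ℝ, ∀ u ∈ V.erase v, c u < c v := by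
  have hnot : v ∉ convexHull ℝ (V.erase v : Set E) := fun hmem ↦ by
    have := extremePoints_convexHull_subset <| inter_extremePoints_subset_extremePoints_of_subset
      (convexHull_mono (Finset.coe_subset.2 (V.erase_subset v))) ⟨hmem, hv⟩
    simp at this
  obtain ⟨f, s, hf, hs⟩ := geometric_hahn_banach_closed_point (convex_convexHull ℝ _)
    ((V.erase v).finite_toSet.isClosed_convexHull (𝕜 := ℝ)) hnot
  exact ⟨f.toLinearMap, fun u hu ↦ (hf u (subset_convexHull ℝ _ hu)).trans hs⟩

theorem exists_linearMap_jointly_injective {c : (Fin 2 → ℝ) →ₗ[ℝ] ℝ} (hc : c ≠ 0) :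
    ∃ g : (Fin 2 → ℝ) →ₗ[ℝ] ℝ, ∀ x, c x = 0 → g x = 0 → x = 0 := by
  set p := c ![1, 0]
  set q := c ![0, 1]
  have hcx (x : Fin 2 → ℝ) : c x = x 0 * p + x 1 * q := by
    conv_lhs => rw [show x = x 0 • ![1, 0] + x 1 • ![0, 1] by ext i; fin_cases i <;> simp]
    rw [map_add, map_smul, map_smul, smul_eq_mul, smul_eq_mul]
  have hpq : p ^ 2 + q ^ 2 ≠ 0 := fun h ↦ hc <| LinearMap.ext fun x ↦ by
    have hp : p = 0 := by nlinarith
    have hq : q = 0 := by nlinarith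
    simp [hcx, hp, hq]
  refine ⟨q • LinearMap.proj 0 - p • LinearMap.proj 1, fun x h₁ h₂ ↦ ?_⟩
  simp only [LinearMap.sub_apply, LinearMap.smul_apply, LinearMap.proj_apply, smul_eq_mul] at h₂
  rw [hcx] at h₁
  have h₀ : x 0 * (p ^ 2 + q ^ 2) = 0 := by linear_combination p * h₁ + q * h₂
  have h₁ : x 1 * (p ^ 2 + q ^ 2) = 0 := by linear_combination q * h₁ - p * h₂
  ext i
  fin_cases i
  · simpa [hpq] using h₀
  · simpa [hpq] using h₁

theorem exists_isEdge_iff_eq_or_eq {V : Finset (Fin 2 → ℝ)}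
    (hV : finrank ℝ (vectorSpan ℝ (V : Set (Fin 2 → ℝ))) = 2)
    (hvert : ∀ u ∈ V, u ∈ (convexHull ℝ (V : Set (Fin 2 → ℝ))).extremePoints ℝ) {v : Fin 2 → ℝ}
    (hv : v ∈ V) :
    ∃ a ∈ V.erase v, ∃ b ∈ V.erase v, a ≠ b ∧ ∀ w ∈ V.erase v, IsEdge V v w ↔ w = a ∨ w = b := by
  obtain ⟨x, hx, y, hy, hxy⟩ : (V.erase v : Set (Fin 2 → ℝ)).Nontrivial := by
    rw [← Set.not_subsingleton_iff]
    intro h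
    have := finrank_vectorSpan_insert_le_set ℝ (V.erase v : Set (Fin 2 → ℝ)) v
    rw [← Finset.coe_insert, Finset.insert_erase hv, hV,
      (vectorSpan_eq_bot_iff_subsingleton (k := ℝ)).2 h, finrank_bot] at this
    omega
  obtain ⟨c, hc⟩ := exists_linearMap_lt_of_mem_extremePoints (hvert v hv)
  replace hc : ∀ u ∈ V.erase v, c (u - v) < 0 := fun u hu ↦ by
    rw [map_sub, sub_neg]
    exact hc u hu
  obtain ⟨g, hcg⟩ := exists_linearMap_jointly_injective (c := c) fun h ↦ by
    simpa [h] using hc x hx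
  have hinj := raySlope_injOn hvert hv hc hcg
  obtain ⟨a, ha, hmax⟩ := (V.erase v).exists_max_image (raySlope c g v) ⟨x, hx⟩
  obtain ⟨b, hb, hmin⟩ := (V.erase v).exists_min_image (raySlope c g v) ⟨x, hx⟩
  have hab : a ≠ b := by
    rintro rfl
    exact hxy (hinj hx hy ((le_antisymm (hmax x hx) (hmin x hx)).trans
      (le_antisymm (hmax y hy) (hmin y hy)).symm))
  refine ⟨a, ha, b, hb, hab, fun w hw ↦ ⟨eq_or_eq_of_isEdge hvert hv hc hcg ha hb hw hmax hmin,
    ?_⟩⟩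
  rintro (rfl | rfl)
  · exact isEdge_of_forall_raySlope_le hV hvert hv hc hcg hw hmax
  · refine isEdge_of_forall_raySlope_le (g := -g) hV hvert hv hc
      (fun x h₁ h₂ ↦ hcg x h₁ (neg_eq_zero.1 h₂)) hw fun u hu ↦ ?_
    simpa only [raySlope_neg, neg_le_neg_iff] using hmin u hu

theorem facetGraph_isRegularOfDegree_two {V : Finset (Fin 2 → ℝ)}
    (hV : finrank ℝ (vectorSpan ℝ (V : Set (Fin 2 → ℝ))) = 2)
    (hvert : ∀ u ∈ V, u ∈ (convexHull ℝ (V : Set (Fin 2 → ℝ))).extremePoints ℝ)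
    [DecidableRel (facetGraph V).Adj] : (facetGraph V).IsRegularOfDegree 2 := by
  rintro ⟨v, hv⟩
  obtain ⟨a, ha, b, hb, hab, hedge⟩ := exists_isEdge_iff_eq_or_eq hV hvert hv
  rw [← SimpleGraph.card_neighborFinset_eq_degree, Finset.card_eq_two]
  refine ⟨⟨a, Finset.mem_of_mem_erase ha⟩, ⟨b, Finset.mem_of_mem_erase hb⟩,
    Subtype.coe_ne_coe.1 hab, ?_⟩
  ext ⟨w, hw⟩
  simp only [SimpleGraph.mem_neighborFinset, facetGraph_adj, Finset.mem_insert,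
    Finset.mem_singleton, ne_eq, Subtype.mk.injEq]
  rcases eq_or_ne w v with rfl | hwv
  · simp [(Finset.ne_of_mem_erase ha).symm, (Finset.ne_of_mem_erase hb).symm]
  · rw [← hedge w (Finset.mem_erase.2 ⟨hwv, hw⟩)]
    simp [hwv.symm]

/-- A polygon (2-polytope) has a special 1-simplex — two vertices such that every
edge (facet) contains exactly one of them — if and only if it has exactly 4
vertices, i.e. is a convex quadrilateral. -/
theorem polygon_special_one_simplex_iff_quadrilateral
    (V : Finset (Fin 2 → ℝ)) (P : Set (Fin 2 → ℝ))
    (hP : P = convexHull ℝ (V : Set (Fin 2 → ℝ)))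
    (hfull : Module.finrank ℝ (vectorSpan ℝ P) = 2)
    (hvert : ∀ u ∈ V, u ∈ Set.extremePoints ℝ P) :
    (∃ v₀ ∈ V, ∃ v₁ ∈ V, v₀ ≠ v₁ ∧
      ∀ F : Set (Fin 2 → ℝ), IsFacet P F → Xor' (v₀ ∈ F) (v₁ ∈ F)) ↔ V.card = 4 := by
  classical
  subst hP
  rw [vectorSpan_convexHull] at hfull
  rw [← Fintype.card_coe,
    ← (facetGraph_isRegularOfDegree_two hfull hvert).exists_xor_mem_edge_iff_card_eq_four]
  constructor
  · rintro ⟨v₀, hv₀, v₁, hv₁, hne, h⟩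
    exact ⟨⟨v₀, hv₀⟩, ⟨v₁, hv₁⟩, Subtype.coe_ne_coe.1 hne,
      (forall_xor_mem_isFacet_iff hfull hvert).1 h⟩
  · rintro ⟨v₀, v₁, hne, h⟩
    exact ⟨v₀, v₀.2, v₁, v₁.2, Subtype.coe_ne_coe.2 hne,
      (forall_xor_mem_isFacet_iff hfull hvert).2 h⟩
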